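/- Let (M, A, v, τ) be a First Fit Valid tuple with n bundles, let 1 ≤ i < j ≤ n, let c_i be any chore in A_i and c_j any chore in A_j. If v(c_j) ≤ fs(i), then v(c_j) ≤ v(c_i). -/

import Mathlib

open scoped Classical

noncomputable section

variable {C : Type*} [LinearOrder C]

/-- Total cost of a bundle of chores: the sum of the chore costs. -/
def bundleCost (v : C → ℝ) (B : Finset C) : ℝ := ∑ c ∈ B, v c

/-- The universal ordering is the ambient linear order on `C`, along which costs are
non-increasing; hence the `p`-th largest chore `B[p]` of a bundle `B` (ties broken by the
universal ordering) is the `p`-th element of `B` sorted along the order.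
`nthCost v B p` is `v (B[p])` (1-indexed), with the convention `0` for `p > |B|`. -/
def nthCost (v : C → ℝ) (B : Finset C) (p : ℕ) : ℝ :=
  ((B.sort (· ≤ ·)).map v).getD (p - 1) 0

/-- `B1 =lex B2` : equal cost at each position. -/
def lexEq (v : C → ℝ) (B1 B2 : Finset C) : Prop :=
  ∀ p : ℕ, nthCost v B1 p = nthCost v B2 p

/-- `B1 ≤lex B2`. -/
def lexLe (v : C → ℝ) (B1 B2 : Finset C) : Prop :=
  lexEq v B1 B2 ∨
    ∃ q : ℕ, nthCost v B1 q < nthCost v B2 q ∧ ∀ p < q, nthCost v B1 p = nthCost v B2 p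

/-- `B1 <lex B2`. -/
def lexLt (v : C → ℝ) (B1 B2 : Finset C) : Prop :=
  lexLe v B1 B2 ∧ ¬ lexEq v B1 B2

/-- `(M, v)` is a chore instance for the universal ordering given by the linear order on `C`:
all costs are nonnegative and non-increasing along the ordering. -/
def ChoreOrdered (M : Finset C) (v : C → ℝ) : Prop :=
  (∀ c ∈ M, 0 ≤ v c) ∧ ∀ c ∈ M, ∀ c' ∈ M, c ≤ c' → v c' ≤ v c

/-- `P` is a partition of `M` into `n` (possibly empty) bundles. -/
def IsPartition (M : Finset C) {n : ℕ} (P : Fin n → Finset C) : Prop :=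
  (∀ i, P i ⊆ M) ∧ (∀ i j, i ≠ j → Disjoint (P i) (P j)) ∧ ∀ c ∈ M, ∃ i, c ∈ P i

/-- The maximin share: the minimum over partitions of `M` into `n` bundles of the
maximum bundle cost. -/
def MMS (M : Finset C) (v : C → ℝ) (n : ℕ) : ℝ :=
  sInf {x : ℝ | ∃ P : Fin n → Finset C, IsPartition M P ∧ ∀ i, bundleCost v (P i) ≤ x}

/-- One pass of first-fit: scan the chores in the given list order, adding a chore whenever
the bundle cost stays at most `τ`. -/
def ffdFill (v : C → ℝ) (τ : ℝ) : List C → Finset C → Finset C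
  | [], B => B
  | c :: rest, B =>
      if bundleCost v (insert c B) ≤ τ then ffdFill v τ rest (insert c B)
      else ffdFill v τ rest B

/-- The bundle FFD builds from the remaining chores `R` (scanned from largest to smallest,
i.e. along the linear order on `C`). -/
def ffdBundle (v : C → ℝ) (τ : ℝ) (R : Finset C) : Finset C :=
  ffdFill v τ (R.sort (· ≤ ·)) ∅

/-- The chores remaining after FFD has filled `k` bundles. -/
def ffdRem (M : Finset C) (v : C → ℝ) (τ : ℝ) : ℕ → Finset C
  | 0 => M
  | k + 1 => ffdRem M v τ k \ ffdBundle v τ (ffdRem M v τ k)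

/-- The `(k+1)`-st bundle (0-indexed `k`) output by FFD. -/
def FFDBundle (M : Finset C) (v : C → ℝ) (τ : ℝ) (k : ℕ) : Finset C :=
  ffdBundle v τ (ffdRem M v τ k)

/-- `FFD(M, v, τ, n)` allocates all chores. -/
def FFDAllocatesAll (M : Finset C) (v : C → ℝ) (τ : ℝ) (n : ℕ) : Prop :=
  ffdRem M v τ n = ∅

/-- The union `A_1 ∪ ⋯ ∪ A_{k-1}` of the bundles preceding the `k`-th one (0-indexed). -/
def priorUnion {n : ℕ} (A : Fin n → Finset C) (k : Fin n) : Finset C :=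
  (Finset.univ.filter fun j : Fin n => j < k).biUnion A

/-- `B` is a `k`-th benchmark bundle of the collection `A`: a lexicographically maximal
subset of `M \ (A_1 ∪ ⋯ ∪ A_{k-1})` among subsets of cost at most `τ`. -/
def IsBenchmark (M : Finset C) (v : C → ℝ) (τ : ℝ) {n : ℕ}
    (A : Fin n → Finset C) (k : Fin n) (B : Finset C) : Prop :=
  B ⊆ M \ priorUnion A k ∧ bundleCost v B ≤ τ ∧
    ∀ B' ⊆ M \ priorUnion A k, bundleCost v B' ≤ τ → lexLe v B' B

/-- The tuple `(M, A, v, τ)` is First Fit Valid: `A` consists of pairwise disjoint bundles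
in `M`, `τ ≥ MMS(M, v, n)`, and each `A_k` is lexicographically at least the `k`-th
benchmark bundle. -/
def FirstFitValid (M : Finset C) {n : ℕ} (A : Fin n → Finset C) (v : C → ℝ) (τ : ℝ) : Prop :=
  (∀ k, A k ⊆ M) ∧ (∀ i j, i ≠ j → Disjoint (A i) (A j)) ∧ MMS M v n ≤ τ ∧
    ∀ (k : Fin n) (B : Finset C), IsBenchmark M v τ A k B → lexLe v B (A k)

/-- `c` is the last chore `B[|B|]` of the bundle `B`. -/
def IsLastChore (B : Finset C) (c : C) : Prop := c ∈ B ∧ ∀ c' ∈ B, c' ≤ c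

/-- The fit-in space `fs` of a bundle: `τ` minus the cost of the bundle without its
last chore. -/
def fitSpace (v : C → ℝ) (τ : ℝ) (B : Finset C) : ℝ :=
  if h : B.Nonempty then τ - bundleCost v (B.erase (B.max' h)) else τ

/-- The chore `c = B[p]` of `B` is `x`-redundant: the cost of `{B[1], …, B[p-1]}`
is at least `x`. -/
def Redundant (v : C → ℝ) (x : ℝ) (B : Finset C) (c : C) : Prop :=
  c ∈ B ∧ x ≤ bundleCost v (B.filter fun c' => c' < c)

/-- `A` dominates `B`: there is `f : B → A` with `v(f⁻¹(c')) ≤ v(c')` for every `c' ∈ A`. -/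
def Dominates (v : C → ℝ) (A B : Finset C) : Prop :=
  ∃ f : C → C, (∀ c ∈ B, f c ∈ A) ∧
    ∀ c' ∈ A, bundleCost v (B.filter fun c => f c = c') ≤ v c'

/-- `cnew` is a suitable reduced chore for `cstar` (the excessive chore of `A_k`):
`v(cnew) < v(cstar)` and, running FFD on `M' = (M \ {cstar}) ∪ {cnew}`, the union of the
first `k` output bundles equals `((A_1 ∪ ⋯ ∪ A_k) \ {cstar}) ∪ {cnew}`. -/
def SuitableReduced (M : Finset C) (v : C → ℝ) (τ : ℝ) {n : ℕ}
    (A : Fin n → Finset C) (k : Fin n) (cstar cnew : C) : Prop :=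
  v cnew < v cstar ∧
    (Finset.univ.filter fun j : Fin n => j ≤ k).biUnion
        (fun j => FFDBundle (insert cnew (M.erase cstar)) v τ j.val) =
      insert cnew (((Finset.univ.filter fun j : Fin n => j ≤ k).biUnion A).erase cstar)

/-- The Tidy-Up conditions on the tuple `(M, A, v, τ)`. -/
def TidyUp (M : Finset C) {n : ℕ} (A : Fin n → Finset C) (v : C → ℝ) (τ : ℝ) : Prop :=
  FirstFitValid M A v τ ∧
  (∃ cstar, M \ Finset.univ.biUnion A = {cstar} ∧ ∀ c ∈ M, v cstar ≤ v c) ∧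
  (∀ k, ∀ c ∈ A k, ¬ Redundant v (MMS M v n) (A k) c) ∧
  (∀ c ∈ M, τ - MMS M v n < v c) ∧
  (∀ k, 2 ≤ (A k).card ∧ nthCost v (A k) 1 + nthCost v (A k) 2 < MMS M v n) ∧
  (∃ P : Fin n → Finset C, IsPartition M P ∧
    (∀ j, bundleCost v (P j) ≤ MMS M v n ∧ 3 ≤ (P j).card) ∧
    ∀ k j, ¬ Dominates v (A k) (P j))

/-- One pass of HFFD's first-fit with remaining agents `T`: a chore is added iff some
remaining agent accepts the enlarged bundle. -/
def hffdFill {n : ℕ} (v : Fin n → C → ℝ) (h : Fin n → ℝ) (T : Finset (Fin n)) :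
    List C → Finset C → Finset C
  | [], B => B
  | c :: rest, B =>
      if ∃ i ∈ T, bundleCost (v i) (insert c B) ≤ h i then
        hffdFill v h T rest (insert c B)
      else hffdFill v h T rest B

/-- `(A, assign)` is a run of HFFD on the instance `(M, v)` with thresholds `h`:
bundle `A_k` is built by first-fit over the remaining chores using the remaining agents,
and is assigned to the remaining agent `assign k`, who accepts it. -/
def IsHFFDRun {n : ℕ} (M : Finset C) (v : Fin n → C → ℝ) (h : Fin n → ℝ)
    (A : Fin n → Finset C) (assign : Fin n → Fin n) : Prop :=
  Function.Injective assign ∧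
    ∀ k : Fin n,
      A k = hffdFill v h
          (Finset.univ \ (Finset.univ.filter fun j : Fin n => j < k).image assign)
          ((M \ priorUnion A k).sort (· ≤ ·)) ∅ ∧
      bundleCost (v (assign k)) (A k) ≤ h (assign k)

/-!
If `v cj > v ci`, then `cj` is also costlier than the last chore `m` of `A_i`. Swapping `m` for
`cj` gives a bundle of chores still available when `A_i` is formed, which fits under `τ` exactly
because `v cj ≤ fs(i)`. Its sorted cost vector dominates that of `A_i` pointwise (count the chores
of cost at least `x`, for each `x > 0`) and its total cost is larger, so it is lexicographically
larger than `A_i`. But the `i`-th benchmark bundle is lexicographically at least every such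
bundle and at most `A_i`.
-/

open Finset

-- The hypothesis `0 < x` keeps the padding value `0` of `getD` from counting as a hit.
theorem List.le_getD_iff_lt_countP {l : List ℝ} (hl : l.Pairwise (· ≥ ·)) {x : ℝ} (hx : 0 < x)
    (k : ℕ) : x ≤ l.getD k 0 ↔ k < l.countP (x ≤ ·) := by
  induction l generalizing k with
  | nil => simp [hx.not_ge]
  | cons a t ih =>
    obtain ⟨hat, ht⟩ := List.pairwise_cons.mp hl
    by_cases ha : x ≤ a
    · cases k with
      | zero => simp [ha]
      | succ k => rw [List.getD_cons_succ, ih ht]; simp [ha]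
    · have ht0 : t.countP (x ≤ ·) = 0 :=
        List.countP_eq_zero.mpr fun b hb => by simpa using (hat b hb).trans_lt (not_le.mp ha)
      cases k with
      | zero => simp [ha, ht0]
      | succ k => rw [List.getD_cons_succ, ih ht]; simp [ha, ht0]

section Chores

variable {v : C → ℝ}

theorem bundleCost_insert {B : Finset C} {b : C} (hb : b ∉ B) :
    bundleCost v (insert b B) = v b + bundleCost v B :=
  sum_insert hb

theorem bundleCost_erase_add {B : Finset C} {a : C} (ha : a ∈ B) :
    bundleCost v (B.erase a) + v a = bundleCost v B :=
  sum_erase_add B v ha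

theorem bundleCost_eq_sum_map_sort (B : Finset C) :
    bundleCost v B = ((B.sort (· ≤ ·)).map v).sum := by
  rw [bundleCost, sum_eq_multiset_sum, ← sort_eq B (· ≤ ·), Multiset.map_coe, Multiset.sum_coe]

theorem lexLe_iff_toLex_le {B₁ B₂ : Finset C} :
    lexLe v B₁ B₂ ↔ toLex (nthCost v B₁) ≤ toLex (nthCost v B₂) := by
  constructor
  · rintro (h | ⟨q, hq, hprev⟩)
    · exact (congrArg toLex (funext h)).le
    · exact le_of_lt ⟨q, hprev, hq⟩
  · intro h
    rcases h.lt_or_eq with ⟨q, hprev, hq⟩ | h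
    · exact Or.inr ⟨q, hq, hprev⟩
    · exact Or.inl (congrFun (toLex.injective h))

theorem le_nthCost_iff {B : Finset C} (hv : AntitoneOn v B) {x : ℝ} (hx : 0 < x) (p : ℕ) :
    x ≤ nthCost v B p ↔ p - 1 < #{c ∈ B | x ≤ v c} := by
  have hsorted : ((B.sort (· ≤ ·)).map v).Pairwise (· ≥ ·) :=
    List.pairwise_map.2 <| (B.pairwise_sort (· ≤ ·)).imp_of_mem fun ha hb hab =>
      hv ((mem_sort _).1 ha) ((mem_sort _).1 hb) hab
  rw [nthCost, List.le_getD_iff_lt_countP hsorted hx, List.countP_map,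
    Function.comp_def, ← Multiset.coe_countP, sort_eq, Multiset.countP_eq_card_filter]
  rfl

theorem nthCost_nonneg {B : Finset C} (hv : ∀ c ∈ B, 0 ≤ v c) (p : ℕ) : 0 ≤ nthCost v B p := by
  rw [nthCost, List.getD_eq_getElem?_getD]
  cases h : ((B.sort (· ≤ ·)).map v)[p - 1]? with
  | none => rfl
  | some y =>
    obtain ⟨c, hc, rfl⟩ := List.mem_map.1 (List.mem_of_getElem? h)
    exact hv c ((mem_sort _).1 hc)

theorem nthCost_le_nthCost_of_card_filter_le {A B : Finset C} (hA : AntitoneOn v A)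
    (hB : AntitoneOn v B) (hB₀ : ∀ c ∈ B, 0 ≤ v c)
    (hcount : ∀ x, 0 < x → #{c ∈ A | x ≤ v c} ≤ #{c ∈ B | x ≤ v c}) (p : ℕ) :
    nthCost v A p ≤ nthCost v B p := by
  rcases le_or_gt (nthCost v A p) 0 with h | h
  · exact h.trans (nthCost_nonneg hB₀ p)
  · exact (le_nthCost_iff hB h p).2 (((le_nthCost_iff hA h p).1 le_rfl).trans_le (hcount _ h))

theorem card_filter_le_card_filter_insert_erase {A : Finset C} {a b : C} (ha : a ∈ A)
    (hb : b ∉ A) (hab : v a ≤ v b) (x : ℝ) :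
    #{c ∈ A | x ≤ v c} ≤ #{c ∈ insert b (A.erase a) | x ≤ v c} := by
  rw [filter_insert, filter_erase]
  by_cases hxa : x ≤ v a
  · rw [if_pos (hxa.trans hab),
      card_insert_of_notMem fun h => hb (mem_of_mem_filter _ (mem_of_mem_erase h)),
      card_erase_add_one (mem_filter.2 ⟨ha, hxa⟩)]
  · rw [erase_eq_of_notMem (s := {c ∈ A | x ≤ v c}) fun h => hxa (mem_filter.1 h).2]
    split_ifs
    · exact card_le_card (subset_insert _ _)
    · exact le_rfl

theorem nthCost_le_nthCost_insert_erase {M A : Finset C} {a b : C} (hv : ChoreOrdered M v)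
    (hAM : A ⊆ M) (hbM : b ∈ M) (ha : a ∈ A) (hb : b ∉ A) (hab : v a ≤ v b) (p : ℕ) :
    nthCost v A p ≤ nthCost v (insert b (A.erase a)) p := by
  have hBM : insert b (A.erase a) ⊆ M := insert_subset hbM ((erase_subset _ _).trans hAM)
  have hanti : AntitoneOn v M := hv.2
  exact nthCost_le_nthCost_of_card_filter_le (hanti.mono (coe_subset.2 hAM))
    (hanti.mono (coe_subset.2 hBM)) (fun c hc => hv.1 c (hBM hc))
    (fun x _ => card_filter_le_card_filter_insert_erase ha hb hab x) p

theorem lexEq.bundleCost_eq {B₁ B₂ : Finset C} (h : lexEq v B₁ B₂) (hcard : #B₁ = #B₂) :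
    bundleCost v B₁ = bundleCost v B₂ := by
  have hsorted : (B₁.sort (· ≤ ·)).map v = (B₂.sort (· ≤ ·)).map v := by
    refine List.ext_getElem (by simp [hcard]) fun k h₁ h₂ => ?_
    simpa [nthCost, ← List.getD_eq_getElem _ 0 h₁, ← List.getD_eq_getElem _ 0 h₂] using h (k + 1)
  rw [bundleCost_eq_sum_map_sort, bundleCost_eq_sum_map_sort, hsorted]

theorem toLex_nthCost_lt_insert_erase {M A : Finset C} {a b : C} (hv : ChoreOrdered M v)
    (hAM : A ⊆ M) (hbM : b ∈ M) (ha : a ∈ A) (hb : b ∉ A) (hab : v a < v b) :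
    toLex (nthCost v A) < toLex (nthCost v (insert b (A.erase a))) := by
  have hb' : b ∉ A.erase a := fun h => hb (mem_of_mem_erase h)
  refine (Pi.toLex_monotone
    (nthCost_le_nthCost_insert_erase hv hAM hbM ha hb hab.le)).lt_of_ne fun h => ?_
  have hcost : bundleCost v A = bundleCost v (insert b (A.erase a)) :=
    lexEq.bundleCost_eq (congrFun (toLex.injective h))
      (by rw [card_insert_of_notMem hb', card_erase_add_one ha])
  linarith [bundleCost_insert (v := v) hb', bundleCost_erase_add (v := v) ha]

end Chores

section FirstFitValid

variable {n : ℕ} {M : Finset C} {A : Fin n → Finset C} {v : C → ℝ} {τ : ℝ}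

theorem notMem_priorUnion (hA : ∀ i j, i ≠ j → Disjoint (A i) (A j)) {i j : Fin n} (hij : i ≤ j)
    {c : C} (hc : c ∈ A j) : c ∉ priorUnion A i := by
  simp only [priorUnion, mem_biUnion, mem_filter, mem_univ, true_and, not_exists, not_and]
  exact fun k hk hck => disjoint_left.1 (hA k j (hk.trans_le hij).ne) hck hc

theorem exists_isBenchmark_lexLe (k : Fin n) {B : Finset C} (hB : B ⊆ M \ priorUnion A k)
    (hBτ : bundleCost v B ≤ τ) : ∃ B₀, IsBenchmark M v τ A k B₀ ∧ lexLe v B B₀ := by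
  set S := {B ∈ (M \ priorUnion A k).powerset | bundleCost v B ≤ τ}
  have hS {B : Finset C} (hB : B ⊆ M \ priorUnion A k) (hBτ : bundleCost v B ≤ τ) : B ∈ S :=
    mem_filter.2 ⟨mem_powerset.2 hB, hBτ⟩
  obtain ⟨B₀, hB₀S, hB₀max⟩ := S.exists_max_image (fun B => toLex (nthCost v B)) ⟨B, hS hB hBτ⟩
  rw [mem_filter, mem_powerset] at hB₀S
  exact ⟨B₀, ⟨hB₀S.1, hB₀S.2, fun B' hB' hB'τ => lexLe_iff_toLex_le.2 (hB₀max B' (hS hB' hB'τ))⟩,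
    lexLe_iff_toLex_le.2 (hB₀max B (hS hB hBτ))⟩

theorem FirstFitValid.lexLe_of_subset (h : FirstFitValid M A v τ) (k : Fin n) {B : Finset C}
    (hB : B ⊆ M \ priorUnion A k) (hBτ : bundleCost v B ≤ τ) : lexLe v B (A k) := by
  obtain ⟨B₀, hB₀, hBB₀⟩ := exists_isBenchmark_lexLe k hB hBτ
  exact lexLe_iff_toLex_le.2
    ((lexLe_iff_toLex_le.1 hBB₀).trans (lexLe_iff_toLex_le.1 (h.2.2.2 k B₀ hB₀)))

end FirstFitValid

/-- in a First Fit Valid tuple, if a chore of a later bundle fits in the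
fit-in space of an earlier bundle, then it is no larger than any chore of that bundle. -/
theorem fits_in_earlier_bundle_implies_smaller {n : ℕ}
    (M : Finset C) (A : Fin n → Finset C) (v : C → ℝ) (τ : ℝ)
    (hv : ChoreOrdered M v) (hFFV : FirstFitValid M A v τ)
    (i j : Fin n) (hij : i < j)
    (ci : C) (hci : ci ∈ A i) (cj : C) (hcj : cj ∈ A j)
    (hfit : v cj ≤ fitSpace v τ (A i)) :
    v cj ≤ v ci := by
  by_contra! hlt
  have hAM := hFFV.1
  have hdisj := hFFV.2.1
  have hne : (A i).Nonempty := ⟨ci, hci⟩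
  set m := (A i).max' hne
  have hm : m ∈ A i := max'_mem _ hne
  have hvm : v m < v cj := (hv.2 ci (hAM i hci) m (hAM i hm) (le_max' _ _ hci)).trans_lt hlt
  have hcj_notMem : cj ∉ A i := disjoint_left.1 (hdisj j i hij.ne') hcj
  have hB : insert cj ((A i).erase m) ⊆ M \ priorUnion A i :=
    insert_subset (mem_sdiff.2 ⟨hAM j hcj, notMem_priorUnion hdisj hij.le hcj⟩)
      fun c hc => mem_sdiff.2 ⟨hAM i (mem_of_mem_erase hc),
        notMem_priorUnion hdisj le_rfl (mem_of_mem_erase hc)⟩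
  have hBτ : bundleCost v (insert cj ((A i).erase m)) ≤ τ := by
    rw [fitSpace, dif_pos hne] at hfit
    rw [bundleCost_insert fun h => hcj_notMem (mem_of_mem_erase h)]
    linarith
  exact (lexLe_iff_toLex_le.1 (hFFV.lexLe_of_subset i hB hBτ)).not_gt
    (toLex_nthCost_lt_insert_erase hv (hAM i) (hAM j hcj) hm hcj_notMem hvm)
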